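/- Suppose the trigger η satisfies ‖η‖₂² ≥ 4 ηᵀ(m₁−m₀). Then the mean absolute deviation between the poisoned and clean regression functions under the clean input distribution satisfies ∫ |f^poi_*(x) − f^cl_*(x)| μ^cl_X(x) dx ≤ λ h₁^η(‖η‖₂/2) + (ρ/(1−ρ)) max_{i=0,1} h_i^η(‖η‖₂/4). -/
import Mathlib


open MeasureTheory Real
open scoped RealInnerProductSpace

noncomputable section

/-- The clean input density `μ^cl_X(x) = λ ν₁(x) + (1-λ) ν₀(x)`. -/
def muCl {p : ℕ} (lam : ℝ) (ν : Fin 2 → EuclideanSpace ℝ (Fin p) → ℝ)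
    (x : EuclideanSpace ℝ (Fin p)) : ℝ :=
  lam * ν 1 x + (1 - lam) * ν 0 x

/-- The backdoor input density `μ^bd_X(x) = λ ν₁(x-η) + (1-λ) ν₀(x-η)`. -/
def muBd {p : ℕ} (lam : ℝ) (ν : Fin 2 → EuclideanSpace ℝ (Fin p) → ℝ)
    (η x : EuclideanSpace ℝ (Fin p)) : ℝ :=
  lam * ν 1 (x - η) + (1 - lam) * ν 0 (x - η)

/-- The poisoned input density `μ^poi_X = (1-ρ) μ^cl_X + ρ μ^bd_X`. -/
def muPoi {p : ℕ} (lam ρ : ℝ) (ν : Fin 2 → EuclideanSpace ℝ (Fin p) → ℝ)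
    (η x : EuclideanSpace ℝ (Fin p)) : ℝ :=
  (1 - ρ) * muCl lam ν x + ρ * muBd lam ν η x

/-- The clean regression function `f^cl_*(x) = λ ν₁(x) / μ^cl_X(x)`. -/
def fCl {p : ℕ} (lam : ℝ) (ν : Fin 2 → EuclideanSpace ℝ (Fin p) → ℝ)
    (x : EuclideanSpace ℝ (Fin p)) : ℝ :=
  lam * ν 1 x / muCl lam ν x

/-- The poisoned regression function `f^poi_*(x) = (1-ρ) λ ν₁(x) / μ^poi_X(x)`. -/
def fPoi {p : ℕ} (lam ρ : ℝ) (ν : Fin 2 → EuclideanSpace ℝ (Fin p) → ℝ)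
    (η x : EuclideanSpace ℝ (Fin p)) : ℝ :=
  (1 - ρ) * lam * ν 1 x / muPoi lam ρ ν η x

/-- The tail function `h_i^η(r) = ∫_{x : |(x-m)ᵀη| ≥ r ‖η‖₂} ν(x) dx`. -/
def tailProb {p : ℕ} (ν : EuclideanSpace ℝ (Fin p) → ℝ) (m η : EuclideanSpace ℝ (Fin p))
    (r : ℝ) : ℝ :=
  ∫ x in {x : EuclideanSpace ℝ (Fin p) | r * ‖η‖ ≤ |⟪x - m, η⟫|}, ν x

/-- A Lebesgue probability density on `ℝ^p`. -/
def IsProbDensity {p : ℕ} (ν : EuclideanSpace ℝ (Fin p) → ℝ) : Prop :=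
  Measurable ν ∧ (∀ x, 0 ≤ ν x) ∧ Integrable ν ∧ (∫ x, ν x) = 1

/-- `m` is the mean of the probability density `ν`. -/
def HasCondMean {p : ℕ} (ν : EuclideanSpace ℝ (Fin p) → ℝ)
    (m : EuclideanSpace ℝ (Fin p)) : Prop :=
  (∫ x, ν x • x) = m

/-- Monotone-density assumption: the density decreases along any ray from its mean. -/
def MonotoneDensity {p : ℕ} (ν : EuclideanSpace ℝ (Fin p) → ℝ)
    (m : EuclideanSpace ℝ (Fin p)) : Prop :=
  ∀ (η : EuclideanSpace ℝ (Fin p)) (c1 c2 : ℝ), 0 < c1 → c1 < c2 →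
    ν (m - c2 • η) ≤ ν (m - c1 • η)

/-- The loss `ℓ` is `(C,α)`-Hölder on `[0,1]²`. -/
def IsHolderLoss (ℓ : ℝ → ℝ → ℝ) (C α : ℝ) : Prop :=
  ∀ x ∈ Set.Icc (0:ℝ) 1, ∀ y ∈ Set.Icc (0:ℝ) 1, ∀ z ∈ Set.Icc (0:ℝ) 1,
    |ℓ x y - ℓ x z| ≤ C * |y - z| ^ α ∧ |ℓ x y - ℓ z y| ≤ C * |x - z| ^ α

/-- bias bound, Eqs. (7)–(9) in the proof of Theorem 1: if
`‖η‖₂² ≥ 4 ηᵀ(m₁-m₀)`, then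
`∫ |f^poi_*(x) - f^cl_*(x)| μ^cl_X(x) dx ≤ λ h₁^η(‖η‖₂/2) + (ρ/(1-ρ)) max_i h_i^η(‖η‖₂/4)`. -/
theorem regression_bias_bound {p : ℕ} (hp : 1 ≤ p)
    (ν : Fin 2 → EuclideanSpace ℝ (Fin p) → ℝ) (m : Fin 2 → EuclideanSpace ℝ (Fin p))
    (lam ρ : ℝ) (hlam : lam ∈ Set.Ioo (0:ℝ) 1) (hρ : ρ ∈ Set.Ioo (0:ℝ) 1)
    (hν : ∀ i, IsProbDensity (ν i)) (hm : ∀ i, HasCondMean (ν i) (m i))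
    (η : EuclideanSpace ℝ (Fin p)) (hη : 4 * ⟪η, m 1 - m 0⟫ ≤ ‖η‖ ^ 2) :
    (∫ x, |fPoi lam ρ ν η x - fCl lam ν x| * muCl lam ν x) ≤
      lam * tailProb (ν 1) (m 1) η (‖η‖ / 2)
        + ρ / (1 - ρ) *
          max (tailProb (ν 0) (m 0) η (‖η‖ / 4)) (tailProb (ν 1) (m 1) η (‖η‖ / 4)) := by
  obtain ⟨hl0, hl1⟩ := hlam
  obtain ⟨hr0, hr1⟩ := hρ
  have h1r : (0:ℝ) < 1 - ρ := by linarith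
  have h1l : (0:ℝ) < 1 - lam := by linarith
  have hmeas : ∀ i, Measurable (ν i) := fun i => (hν i).1
  have hnn : ∀ i x, 0 ≤ ν i x := fun i => (hν i).2.1
  have hint : ∀ i, Integrable (ν i) := fun i => (hν i).2.2.1
  -- nonnegativity of densities
  have hA : ∀ x, 0 ≤ muCl lam ν x := fun x =>
    add_nonneg (mul_nonneg hl0.le (hnn 1 x)) (mul_nonneg h1l.le (hnn 0 x))
  have hB : ∀ x, 0 ≤ muBd lam ν η x := fun x =>
    add_nonneg (mul_nonneg hl0.le (hnn 1 _)) (mul_nonneg h1l.le (hnn 0 _))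
  have haA : ∀ x, lam * ν 1 x ≤ muCl lam ν x := fun x => by
    have := mul_nonneg h1l.le (hnn 0 x); unfold muCl; linarith
  -- the splitting set
  set S : Set (EuclideanSpace ℝ (Fin p)) :=
    {x | ‖η‖ / 2 * ‖η‖ ≤ |⟪x - m 1, η⟫|} with hSdef
  have hSmeas : MeasurableSet S := by
    have hc : Continuous fun x : EuclideanSpace ℝ (Fin p) => |⟪x - m 1, η⟫| :=
      (Continuous.inner (continuous_id.sub continuous_const) continuous_const).abs
    exact measurableSet_le measurable_const hc.measurable
  -- tail sets
  set C : Fin 2 → Set (EuclideanSpace ℝ (Fin p)) :=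
    fun i => {x | ‖η‖ / 4 * ‖η‖ ≤ |⟪x - m i, η⟫|} with hCdef
  have hCmeas : ∀ i, MeasurableSet (C i) := by
    intro i
    have hc : Continuous fun x : EuclideanSpace ℝ (Fin p) => |⟪x - m i, η⟫| :=
      (Continuous.inner (continuous_id.sub continuous_const) continuous_const).abs
    exact measurableSet_le measurable_const hc.measurable
  -- geometry: shifted points from Sᶜ land in the tail sets
  have hgeom : ∀ x ∈ Sᶜ, ∀ i, x - η ∈ C i := by
    intro x hx i
    have hx' : |⟪x - m 1, η⟫| < ‖η‖ / 2 * ‖η‖ := not_le.mp hx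
    have hsq : ⟪η, η⟫ = ‖η‖ * ‖η‖ := real_inner_self_eq_norm_mul_norm η
    have habs : ⟪x - m 1, η⟫ ≤ |⟪x - m 1, η⟫| := le_abs_self _
    have hrnn : 0 ≤ ‖η‖ * ‖η‖ := mul_nonneg (norm_nonneg η) (norm_nonneg η)
    have ehalf : ‖η‖ / 2 * ‖η‖ = ‖η‖ * ‖η‖ / 2 := by ring
    have equarter : ‖η‖ / 4 * ‖η‖ = ‖η‖ * ‖η‖ / 4 := by ring
    have e1 : ⟪(x - η) - m 1, η⟫ = ⟪x - m 1, η⟫ - ⟪η, η⟫ := by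
      have : (x - η) - m 1 = (x - m 1) - η := by abel
      rw [this, inner_sub_left]
    fin_cases i
    · -- i = 0
      have e0 : ⟪(x - η) - m 0, η⟫ = ⟪x - m 1, η⟫ - ⟪η, η⟫ + ⟪m 1 - m 0, η⟫ := by
        have : (x - η) - m 0 = ((x - m 1) - η) + (m 1 - m 0) := by abel
        rw [this, inner_add_left, inner_sub_left]
      have hs : ⟪m 1 - m 0, η⟫ ≤ ‖η‖ * ‖η‖ / 4 := by
        rw [real_inner_comm]
        have : ‖η‖ ^ 2 = ‖η‖ * ‖η‖ := pow_two ‖η‖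
        linarith
      have hv : ⟪(x - η) - m 0, η⟫ ≤ -(‖η‖ * ‖η‖) / 4 := by
        rw [e0, hsq]; linarith
      have : -⟪(x - η) - m 0, η⟫ ≤ |⟪(x - η) - m 0, η⟫| := neg_le_abs _
      show ‖η‖ / 4 * ‖η‖ ≤ |⟪(x - η) - m 0, η⟫|
      linarith
    · -- i = 1
      have h2 : ‖η‖ * ‖η‖ - ⟪x - m 1, η⟫ ≤ |⟪x - m 1, η⟫ - ⟪η, η⟫| := by
        rw [abs_sub_comm, hsq]; exact le_abs_self _
      show ‖η‖ / 4 * ‖η‖ ≤ |⟪(x - η) - m 1, η⟫|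
      rw [e1]
      linarith
  -- pointwise bound
  have bound : ∀ x, |fPoi lam ρ ν η x - fCl lam ν x| * muCl lam ν x ≤
      S.indicator (fun y => lam * ν 1 y) x +
      Sᶜ.indicator (fun y => ρ / (1 - ρ) * muBd lam ν η y) x := by
    intro x
    have hBx := hB x
    have hAx := hA x
    have hax : 0 ≤ lam * ν 1 x := mul_nonneg hl0.le (hnn 1 x)
    have key : |fPoi lam ρ ν η x - fCl lam ν x| * muCl lam ν x ≤
        min (lam * ν 1 x) (ρ / (1 - ρ) * muBd lam ν η x) := by
      rcases eq_or_lt_of_le hAx with h0 | hApos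
      · rw [← h0, mul_zero]
        exact le_min hax (by positivity)
      · have hPeq : muPoi lam ρ ν η x =
            (1 - ρ) * muCl lam ν x + ρ * muBd lam ν η x := rfl
        have hPpos : 0 < muPoi lam ρ ν η x := by
          rw [hPeq]; nlinarith
        have hgid : |fPoi lam ρ ν η x - fCl lam ν x| * muCl lam ν x =
            ρ * (lam * ν 1 x) * muBd lam ν η x / muPoi lam ρ ν η x := by
          have h1 : fPoi lam ρ ν η x - fCl lam ν x =
              -(ρ * (lam * ν 1 x) * muBd lam ν η x /
                (muPoi lam ρ ν η x * muCl lam ν x)) := by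
            unfold fPoi fCl
            rw [hPeq]
            field_simp
            ring
          have hPne : muPoi lam ρ ν η x ≠ 0 := ne_of_gt hPpos
          have hAne : muCl lam ν x ≠ 0 := ne_of_gt hApos
          rw [h1, abs_neg, abs_of_nonneg (by positivity)]
          field_simp
        rw [hgid]
        refine le_min ?_ ?_
        · rw [div_le_iff₀ hPpos, hPeq]
          nlinarith [mul_nonneg hax (mul_nonneg h1r.le hAx), mul_nonneg hax hBx,
            mul_nonneg (mul_nonneg hr0.le hax) hBx]
        · rw [div_le_iff₀ hPpos, hPeq]
          have h1 : ρ * muBd lam ν η x * (lam * ν 1 x) ≤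
              ρ * muBd lam ν η x * muCl lam ν x :=
            mul_le_mul_of_nonneg_left (haA x) (mul_nonneg hr0.le hBx)
          have h2 : 0 ≤ ρ / (1 - ρ) * muBd lam ν η x * (ρ * muBd lam ν η x) := by
            positivity
          have h3 : ρ / (1 - ρ) * muBd lam ν η x * ((1 - ρ) * muCl lam ν x) =
              ρ * muBd lam ν η x * muCl lam ν x := by
            field_simp
          nlinarith [h1, h2, h3]
    by_cases hx : x ∈ S
    · rw [Set.indicator_of_mem hx, Set.indicator_of_notMem (by simp [hx])]
      have := min_le_left (lam * ν 1 x) (ρ / (1 - ρ) * muBd lam ν η x)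
      linarith
    · rw [Set.indicator_of_notMem hx, Set.indicator_of_mem (by simpa using hx)]
      have := min_le_right (lam * ν 1 x) (ρ / (1 - ρ) * muBd lam ν η x)
      linarith
  -- integrability
  have hshift : ∀ i, Integrable (fun x => ν i (x - η)) := fun i =>
    (hint i).comp_sub_right η
  have hBint : Integrable (muBd lam ν η) := by
    unfold muBd
    exact ((hshift 1).const_mul lam).add ((hshift 0).const_mul (1 - lam))
  have hint1 : Integrable (S.indicator (fun y => lam * ν 1 y)) :=
    ((hint 1).const_mul lam).indicator hSmeas
  have hint2 : Integrable (Sᶜ.indicator (fun y => ρ / (1 - ρ) * muBd lam ν η y)) :=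
    (hBint.const_mul _).indicator hSmeas.compl
  have hDint : Integrable (fun x => S.indicator (fun y => lam * ν 1 y) x +
      Sᶜ.indicator (fun y => ρ / (1 - ρ) * muBd lam ν η y) x) := hint1.add hint2
  -- measurability of the integrand
  have hgmeas : Measurable (fun x => |fPoi lam ρ ν η x - fCl lam ν x| * muCl lam ν x) := by
    have mCl : Measurable (muCl lam ν) :=
      ((hmeas 1).const_mul lam).add ((hmeas 0).const_mul (1 - lam))
    have mBd : Measurable (muBd lam ν η) := by
      have ms : ∀ i, Measurable (fun x : EuclideanSpace ℝ (Fin p) => ν i (x - η)) :=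
        fun i => (hmeas i).comp (measurable_id.sub measurable_const)
      exact ((ms 1).const_mul lam).add ((ms 0).const_mul (1 - lam))
    have mPoi : Measurable (muPoi lam ρ ν η) :=
      (mCl.const_mul (1 - ρ)).add (mBd.const_mul ρ)
    have mfCl : Measurable (fCl lam ν) := ((hmeas 1).const_mul lam).div mCl
    have mfPoi : Measurable (fPoi lam ρ ν η) :=
      ((hmeas 1).const_mul ((1 - ρ) * lam)).div mPoi
    exact ((mfPoi.sub mfCl).abs).mul mCl
  have hgint : Integrable (fun x => |fPoi lam ρ ν η x - fCl lam ν x| * muCl lam ν x) := by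
    refine hDint.mono' hgmeas.aestronglyMeasurable (ae_of_all _ fun x => ?_)
    rw [Real.norm_eq_abs, abs_of_nonneg (mul_nonneg (abs_nonneg _) (hA x))]
    exact bound x
  -- main calculation
  have step1 : (∫ x, |fPoi lam ρ ν η x - fCl lam ν x| * muCl lam ν x) ≤
      ∫ x, (S.indicator (fun y => lam * ν 1 y) x +
        Sᶜ.indicator (fun y => ρ / (1 - ρ) * muBd lam ν η y) x) :=
    integral_mono hgint hDint bound
  rw [integral_add hint1 hint2, integral_indicator hSmeas,
    integral_indicator hSmeas.compl, integral_const_mul, integral_const_mul] at step1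
  have hT1 : (∫ x in S, ν 1 x) = tailProb (ν 1) (m 1) η (‖η‖ / 2) := rfl
  -- bound the second piece
  have hIi : ∀ i, (∫ x in Sᶜ, ν i (x - η)) ≤ tailProb (ν i) (m i) η (‖η‖ / 4) := by
    intro i
    have e1 : (∫ x in Sᶜ, ν i (x - η)) =
        ∫ x, Sᶜ.indicator (fun y => ν i (y - η)) x :=
      (integral_indicator hSmeas.compl).symm
    have e2 : (∫ x, (C i).indicator (ν i) (x - η)) = ∫ x, (C i).indicator (ν i) x :=
      integral_sub_right_eq_self ((C i).indicator (ν i)) η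
    have hmono : ∀ x, Sᶜ.indicator (fun y => ν i (y - η)) x ≤
        (C i).indicator (ν i) (x - η) := by
      intro x
      by_cases hx : x ∈ Sᶜ
      · rw [Set.indicator_of_mem hx, Set.indicator_of_mem (hgeom x hx i)]
      · rw [Set.indicator_of_notMem hx]
        exact Set.indicator_nonneg (fun y _ => hnn i y) _
    have hintL : Integrable (Sᶜ.indicator (fun y => ν i (y - η))) :=
      (hshift i).indicator hSmeas.compl
    have hintR : Integrable (fun x => (C i).indicator (ν i) (x - η)) :=
      ((hint i).indicator (hCmeas i)).comp_sub_right η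
    calc (∫ x in Sᶜ, ν i (x - η)) = ∫ x, Sᶜ.indicator (fun y => ν i (y - η)) x := e1
      _ ≤ ∫ x, (C i).indicator (ν i) (x - η) := integral_mono hintL hintR hmono
      _ = ∫ x, (C i).indicator (ν i) x := e2
      _ = ∫ x in C i, ν i x := integral_indicator (hCmeas i)
      _ = tailProb (ν i) (m i) η (‖η‖ / 4) := rfl
  have hBsplit : (∫ x in Sᶜ, muBd lam ν η x) =
      lam * (∫ x in Sᶜ, ν 1 (x - η)) + (1 - lam) * (∫ x in Sᶜ, ν 0 (x - η)) := by
    unfold muBd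
    rw [integral_add (((hshift 1).const_mul lam).restrict)
      (((hshift 0).const_mul (1 - lam)).restrict), integral_const_mul, integral_const_mul]
  have hmax : (∫ x in Sᶜ, muBd lam ν η x) ≤
      max (tailProb (ν 0) (m 0) η (‖η‖ / 4)) (tailProb (ν 1) (m 1) η (‖η‖ / 4)) := by
    rw [hBsplit]
    have h1 := hIi 1
    have h0 := hIi 0
    have hM1 : tailProb (ν 1) (m 1) η (‖η‖ / 4) ≤
        max (tailProb (ν 0) (m 0) η (‖η‖ / 4)) (tailProb (ν 1) (m 1) η (‖η‖ / 4)) :=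
      le_max_right _ _
    have hM0 : tailProb (ν 0) (m 0) η (‖η‖ / 4) ≤
        max (tailProb (ν 0) (m 0) η (‖η‖ / 4)) (tailProb (ν 1) (m 1) η (‖η‖ / 4)) :=
      le_max_left _ _
    nlinarith
  have hfinal : ρ / (1 - ρ) * (∫ x in Sᶜ, muBd lam ν η x) ≤
      ρ / (1 - ρ) * max (tailProb (ν 0) (m 0) η (‖η‖ / 4))
        (tailProb (ν 1) (m 1) η (‖η‖ / 4)) :=
    mul_le_mul_of_nonneg_left hmax (by positivity)
  rw [hT1] at step1
  linarith

end
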